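/- Define φ recursively by: φ(∅) = | (the planar binary tree of order 0); for a planar rooted forest f = (t₁, …, t_k), φ(f) = φ(t₁) \ φ(t₂) \ ⋯ \ φ(t_k); and for a planar rooted tree t whose removal of the root yields the forest f, φ(t) = φ(f) / (1), where (1) is the unique planar binary tree of order 1. Then for every n ≥ 0, φ restricts to a bijection from the set of planar rooted forests with n vertices onto the set Y^n of planar binary trees of order n. -/

import Mathlib

/-- Planar binary trees: `leaf` is the trivial tree `|` of order 0, `node l r` has left
subtree `l` and right subtree `r`. -/
inductive PBT : Type
  | leaf : PBT
  | node : PBT → PBT → PBT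
deriving DecidableEq

/-- The order of a planar binary tree: its number of internal vertices. -/
def PBT.order : PBT → ℕ
  | .leaf => 0
  | .node l r => l.order + r.order + 1

/-- `s \ u`: graft `u` onto the rightmost leaf of `s`. -/
def PBT.graftRight : PBT → PBT → PBT
  | .leaf, u => u
  | .node l r, u => .node l (r.graftRight u)

/-- `s / u`: graft `s` onto the leftmost leaf of `u`. -/
def PBT.graftLeft : PBT → PBT → PBT
  | s, .leaf => s
  | s, .node l r => .node (s.graftLeft l) r

/-- Planar rooted trees: a root vertex together with an ordered (finite) list of subtrees. -/
inductive PRT : Type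
  | node : List PRT → PRT

mutual
  /-- Number of vertices of a planar rooted tree. -/
  def PRT.size : PRT → ℕ
    | .node ts => 1 + sizeForest ts
  /-- Number of vertices of a planar rooted forest. -/
  def sizeForest : List PRT → ℕ
    | [] => 0
    | t :: ts => t.size + sizeForest ts
end

mutual
  /-- `φ` on planar rooted trees: removing the root of `t` gives a forest `f`, and
  `φ(t) = φ(f) / (1)` where `(1)` is the unique planar binary tree of order 1. -/
  def phiT : PRT → PBT
    | .node ts => (phiF ts).graftLeft (PBT.node PBT.leaf PBT.leaf)
  /-- `φ` on planar rooted forests: `φ(∅) = |` and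
  `φ(t₁, …, t_k) = φ(t₁) \ φ(t₂) \ ⋯ \ φ(t_k)`. -/
  def phiF : List PRT → PBT
    | [] => PBT.leaf
    | t :: ts => (phiT t).graftRight (phiF ts)
end

/-! Unfolding the definitions, `φ (t :: ts) = node (φ cs) (φ ts)` when `t` has the subtrees `cs`:
`φ` is the rotation correspondence ("first child, next sibling"), inverted by sending `node l r`
to the forest whose first tree has the subtrees `φ⁻¹ l`, followed by the forest `φ⁻¹ r`.
Each internal vertex of `φ f` corresponds to one vertex of `f`, so `φ` preserves size. -/

def PBT.toForest : PBT → List PRT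
  | .leaf => []
  | .node l r => .node l.toForest :: r.toForest

theorem phiF_node_cons (cs ts : List PRT) :
    phiF (PRT.node cs :: ts) = PBT.node (phiF cs) (phiF ts) := by
  simp [phiF, phiT, PBT.graftLeft, PBT.graftRight]

theorem phiF_toForest : Function.RightInverse PBT.toForest phiF
  | .leaf => rfl
  | .node l r => by rw [PBT.toForest, phiF_node_cons, phiF_toForest l, phiF_toForest r]

theorem toForest_phiF : Function.LeftInverse PBT.toForest phiF
  | [] => rfl
  | .node cs :: ts => by rw [phiF_node_cons, PBT.toForest, toForest_phiF cs, toForest_phiF ts]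

theorem order_phiF : ∀ f : List PRT, (phiF f).order = sizeForest f
  | [] => rfl
  | .node cs :: ts => by
      rw [phiF_node_cons, PBT.order, order_phiF cs, order_phiF ts, sizeForest, PRT.size]
      omega

theorem phiF_bijective : Function.Bijective phiF :=
  ⟨toForest_phiF.injective, phiF_toForest.surjective⟩

/-- for every `n ≥ 0`, `φ` restricts to a bijection from the set of planar
rooted forests with `n` vertices onto the set `Y^n` of planar binary trees of order `n`. -/
theorem phiF_bijOn (n : ℕ) :
    Set.BijOn phiF {f : List PRT | sizeForest f = n} {t : PBT | t.order = n} := by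
  simpa only [Set.preimage_ofPred_eq, order_phiF] using
    phiF_bijective.bijOn_preimage (t := {t : PBT | t.order = n})
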